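/- The Penner pairing descends: if a, a′ ∈ ℂ^E satisfy h(a) = h(a′) (where h(a)_{ij} = a_{ki} − a_{il} + a_{lj} − a_{jk}), then ω̃(a, ã) = ω̃(a′, ã) for every ã ∈ ℂ^E; hence ω_P^ℂ(x, x̃) := ω̃(a, ã) for any a ∈ h⁻¹(x), ã ∈ h⁻¹(x̃) is a well-defined skew-symmetric bilinear form on the image of h. -/
import Mathlib


/-- Penner's skew form on a triangulated surface: `ed f m` (`m : Fin 3`) are the three
edges `ij, jk, ki` of the face `f` in cyclic order. -/
noncomputable def omegaT {E F : Type*} [Fintype F] (ed : F → Fin 3 → E) (a b : E → ℂ) : ℂ :=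
  (-2 : ℂ) * ∑ f : F, ∑ m : Fin 3,
    a (ed f m) * (b (ed f (m + 1)) - b (ed f (m + 2)))

/-- The map `h(a)_{ij} = a_{ki} − a_{il} + a_{lj} − a_{jk}`. -/
def hmap {E F : Type*} (ed : F → Fin 3 → E) (A B : E → F × Fin 3) (a : E → ℂ) (e : E) : ℂ :=
  (a (ed (A e).1 ((A e).2 + 2)) - a (ed (A e).1 ((A e).2 + 1)))
    + (a (ed (B e).1 ((B e).2 + 2)) - a (ed (B e).1 ((B e).2 + 1)))

lemma omegaT_skew {E F : Type*} [Fintype F] (ed : F → Fin 3 → E) (a b : E → ℂ) :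
    omegaT ed b a = - omegaT ed a b := by
  have h : ∀ f : F, (∑ m : Fin 3, b (ed f m) * (a (ed f (m + 1)) - a (ed f (m + 2))))
      = - ∑ m : Fin 3, a (ed f m) * (b (ed f (m + 1)) - b (ed f (m + 2))) := by
    intro f
    have e1 : (0 + 1 : Fin 3) = 1 := rfl
    have e2 : (0 + 2 : Fin 3) = 2 := rfl
    have e3 : (1 + 1 : Fin 3) = 2 := rfl
    have e4 : (1 + 2 : Fin 3) = 0 := rfl
    have e5 : (2 + 1 : Fin 3) = 0 := rfl
    have e6 : (2 + 2 : Fin 3) = 1 := rfl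
    simp only [Fin.sum_univ_three, e1, e2, e3, e4, e5, e6]
    ring
  simp only [omegaT, h, Finset.sum_neg_distrib]
  ring

lemma omegaT_eq_pair {E F : Type*} [Fintype E] [Fintype F]
    (ed : F → Fin 3 → E) (A B : E → F × Fin 3)
    (hA : ∀ e, ed (A e).1 (A e).2 = e)
    (hB : ∀ e, ed (B e).1 (B e).2 = e)
    (hAB : ∀ e, A e ≠ B e)
    (hcover : ∀ (f : F) (m : Fin 3), A (ed f m) = (f, m) ∨ B (ed f m) = (f, m))
    (a b : E → ℂ) :
    omegaT ed a b = 2 * ∑ e : E, a e * hmap ed A B b e := by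
  set G : F × Fin 3 → ℂ := fun p => a (ed p.1 p.2) * (b (ed p.1 (p.2 + 1)) - b (ed p.1 (p.2 + 2)))
  have hbij : Function.Bijective (Sum.elim A B : E ⊕ E → F × Fin 3) := by
    constructor
    · rintro (e | e) (e' | e') h
      · simp only [Sum.elim_inl] at h
        have : e = e' := by rw [← hA e, ← hA e', h]
        exact congrArg Sum.inl this
      · simp only [Sum.elim_inl, Sum.elim_inr] at h
        have he : e = e' := by rw [← hA e, ← hB e', h]
        exact absurd (he ▸ h) (hAB e')
      · simp only [Sum.elim_inl, Sum.elim_inr] at h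
        have he : e = e' := by rw [← hB e, ← hA e', h]
        exact absurd (he ▸ h.symm) (hAB e')
      · simp only [Sum.elim_inr] at h
        have : e = e' := by rw [← hB e, ← hB e', h]
        exact congrArg Sum.inr this
    · rintro ⟨f, m⟩
      rcases hcover f m with h | h
      · exact ⟨Sum.inl (ed f m), h⟩
      · exact ⟨Sum.inr (ed f m), h⟩
  have hsum : (∑ p : F × Fin 3, G p) = ∑ e : E, (G (A e) + G (B e)) := by
    rw [← Fintype.sum_bijective _ hbij (fun s => G (Sum.elim A B s)) G (fun _ => rfl)]
    rw [Fintype.sum_sum_type]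
    simp [Finset.sum_add_distrib]
  have h1 : omegaT ed a b = (-2 : ℂ) * ∑ p : F × Fin 3, G p := by
    rw [omegaT, Fintype.sum_prod_type]
  rw [h1, hsum]
  have h2 : ∀ e : E, G (A e) + G (B e) = - (a e * hmap ed A B b e) := by
    intro e
    simp only [G, hmap, hA e, hB e]
    ring
  simp only [h2, Finset.sum_neg_distrib]
  ring

/-- The Penner pairing descends through `h`: if `h a = h a'` and `h b = h b'` then
`ω̃(a,b) = ω̃(a',b')`; hence `ω_P^ℂ(x,x̃) := ω̃(a,b)` for preimages is a well-defined
(skew-symmetric bilinear) form on the image of `h`. -/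
theorem omegaT_descends {E F : Type*} [Fintype E] [Fintype F]
    (ed : F → Fin 3 → E) (A B : E → F × Fin 3)
    (hA : ∀ e, ed (A e).1 (A e).2 = e)
    (hB : ∀ e, ed (B e).1 (B e).2 = e)
    (hAB : ∀ e, A e ≠ B e)
    (hcover : ∀ (f : F) (m : Fin 3), A (ed f m) = (f, m) ∨ B (ed f m) = (f, m)) :
    ∀ a a' b b' : E → ℂ,
      hmap ed A B a = hmap ed A B a' → hmap ed A B b = hmap ed A B b' →
      omegaT ed a b = omegaT ed a' b' := by
  intro a a' b b' ha hb
  have key : ∀ x y y' : E → ℂ, hmap ed A B y = hmap ed A B y' →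
      omegaT ed x y = omegaT ed x y' := by
    intro x y y' hy
    rw [omegaT_eq_pair ed A B hA hB hAB hcover, omegaT_eq_pair ed A B hA hB hAB hcover, hy]
  calc omegaT ed a b = omegaT ed a b' := key a b b' hb
    _ = - omegaT ed b' a := by rw [omegaT_skew]
    _ = - omegaT ed b' a' := by rw [key b' a a' ha]
    _ = omegaT ed a' b' := by rw [← omegaT_skew]
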